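/- Let u ⊆ {1,…,s} be nonempty and k ∈ {0,1,…,m−1}^{|u|}. Then for every subset w ⊆ u, the generalized gain coefficient Γ^w_{u,k} is either 0 or equal to 2^{m − rank(C_{u,k})}. -/
import Mathlib


open Finset

noncomputable section

/-- The bit vector `i⃗ ∈ F₂^m` of the integer `i = Σ_{ℓ=1}^m i_ℓ 2^{ℓ-1}`. -/
def bvec (m : ℕ) (i : ℕ) : Fin m → ZMod 2 :=
  fun ℓ => if Nat.testBit i ℓ.1 then 1 else 0

/-- The `(r+1)`-st row (i.e. `r` with 0-indexing) of an `m × m` matrix over `F₂`,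
as a vector in `F₂^m`; junk value `0` if `r ≥ m` (never used under the hypotheses below). -/
def rowAt (m : ℕ) (A : Matrix (Fin m) (Fin m) (ZMod 2)) (r : ℕ) : Fin m → ZMod 2 :=
  fun ℓ => if h : r < m then A ⟨r, h⟩ ℓ else 0

/-- The stacked matrix `C_{u,k}`: for each `j ∈ u`, the first `k j` rows of `C j`. -/
def stack {m s : ℕ} (C : Fin s → Matrix (Fin m) (Fin m) (ZMod 2))
    (u : Finset (Fin s)) (k : Fin s → ℕ) :
    Matrix ((j : {x // x ∈ u}) × Fin (k j.1)) (Fin m) (ZMod 2) :=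
  fun p => rowAt m (C p.1.1) p.2.1

/-- `∇C_{u,k}`: the matrix whose rows are the `(k j + 1)`-st rows (1-indexed) of `C j`, `j ∈ u`. -/
def grad {m s : ℕ} (C : Fin s → Matrix (Fin m) (Fin m) (ZMod 2))
    (u : Finset (Fin s)) (k : Fin s → ℕ) :
    Matrix {x // x ∈ u} (Fin m) (ZMod 2) :=
  fun j => rowAt m (C j.1) (k j.1)

/-- The coordinate `x_{ij} ∈ [0,1)` of the digital net generated by `C₁,…,C_s`:
`x_{ij} = Σ_{ℓ=1}^m y_ℓ 2^{-ℓ}` where `y = C_j · i⃗` over `F₂`. -/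
def pt {m s : ℕ} (C : Fin s → Matrix (Fin m) (Fin m) (ZMod 2)) (i : ℕ) (j : Fin s) : ℝ :=
  ∑ ℓ : Fin m, (((C j).mulVec (bvec m i) ℓ).val : ℝ) / 2 ^ (ℓ.1 + 1)

/-- The factor `N`: with `M(x,x') = max{k ∈ ℕ₀ : ⌊2^k x⌋ = ⌊2^k x'⌋}` (the number of matching
leading binary digits), `Nf x x' c` equals `1` if `M(x,x') > c` (equivalently the first `c+1`
binary digits match), `-1` if `M(x,x') = c` (the first `c` digits match but not `c+1`), and
`0` if `M(x,x') < c`. -/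
def Nf (x x' : ℝ) (c : ℕ) : ℤ :=
  if ⌊(2:ℝ) ^ (c + 1) * x⌋ = ⌊(2:ℝ) ^ (c + 1) * x'⌋ then 1
  else if ⌊(2:ℝ) ^ c * x⌋ = ⌊(2:ℝ) ^ c * x'⌋ then -1
  else 0

/-- The gain coefficient `Γ_{u,k} = 2^{-m} Σ_{i=0}^{2^m-1} Σ_{i'=0}^{2^m-1} ∏_{j∈u} N_{i,i',j}`. -/
def Gam {m s : ℕ} (C : Fin s → Matrix (Fin m) (Fin m) (ZMod 2))
    (u : Finset (Fin s)) (k : Fin s → ℕ) : ℚ :=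
  (2 ^ m : ℚ)⁻¹ * ∑ i ∈ Finset.range (2 ^ m), ∑ i' ∈ Finset.range (2 ^ m),
      ∏ j ∈ u, (Nf (pt C i j) (pt C i' j) (k j) : ℚ)

/-- The generalized gain coefficient
`Γ^w_{u,k} = Σ_{i=0}^{2^m-1} 1{C_{u,k}·i⃗ = 0} ∏_{j∈w} N_{0,i,j}` (an empty product equals 1). -/
def GamW {m s : ℕ} (C : Fin s → Matrix (Fin m) (Fin m) (ZMod 2))
    (u : Finset (Fin s)) (k : Fin s → ℕ) (w : Finset (Fin s)) : ℤ :=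
  ∑ i ∈ Finset.range (2 ^ m),
    (if (stack C u k).mulVec (bvec m i) = 0 then (1 : ℤ) else 0) *
      ∏ j ∈ w, Nf (pt C 0 j) (pt C i j) (k j)

section Aux

lemma floor_prefix {m : ℕ} (y : Fin m → ZMod 2) (c : ℕ) (hc : c ≤ m) :
    ⌊(2:ℝ)^c * ∑ ℓ : Fin m, ((y ℓ).val : ℝ) / 2 ^ (ℓ.1+1)⌋ = 0 ↔
    ∀ ℓ : Fin m, ℓ.1 < c → y ℓ = 0 := by
  set x : ℝ := ∑ ℓ : Fin m, ((y ℓ).val : ℝ) / 2 ^ (ℓ.1+1) with hx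
  have hterm_nonneg : ∀ ℓ : Fin m, (0:ℝ) ≤ ((y ℓ).val : ℝ) / 2 ^ (ℓ.1+1) := by
    intro ℓ; positivity
  have hx0 : (0:ℝ) ≤ x := Finset.sum_nonneg fun ℓ _ => hterm_nonneg ℓ
  rw [Int.floor_eq_zero_iff]
  constructor
  · rintro h ℓ hℓ
    by_contra hy
    have hy1 : ((y ℓ).val : ℝ) = 1 := by
      have h1 : y ℓ = 1 := by revert hy; revert h; generalize y ℓ = a; intro _; revert a; decide
      rw [h1]; simp [ZMod.val_one]
    have hsingle : ((2:ℝ))⁻¹^(ℓ.1+1) ≤ x := by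
      have := Finset.single_le_sum (f := fun t : Fin m => ((y t).val : ℝ) / 2 ^ (t.1+1))
        (fun t _ => hterm_nonneg t) (Finset.mem_univ ℓ)
      rw [hx]
      calc ((2:ℝ))⁻¹^(ℓ.1+1) = ((y ℓ).val : ℝ) / 2 ^ (ℓ.1+1) := by
            rw [hy1, inv_pow]; ring
        _ ≤ _ := this
    have hle : (1:ℝ) ≤ 2^c * x := by
      have h2 : ((2:ℝ))⁻¹^c ≤ ((2:ℝ))⁻¹^(ℓ.1+1) :=
        pow_le_pow_of_le_one (by norm_num) (by norm_num) (by omega)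
      have h3 : ((2:ℝ))⁻¹^c ≤ x := le_trans h2 hsingle
      have hcc : (2:ℝ)^c * (2:ℝ)⁻¹^c = 1 := by rw [← mul_pow]; norm_num
      nlinarith [pow_pos (by norm_num : (0:ℝ) < 2) c]
    exact absurd h.2 (by linarith)
  · intro h
    constructor
    · positivity
    · have hbound : x ≤ (2:ℝ)⁻¹^c - (2:ℝ)⁻¹^m := by
        have h1 : x ≤ ∑ n ∈ Finset.range m, (if c ≤ n then ((2:ℝ)⁻¹)^(n+1) else 0) := by
          rw [hx, ← Fin.sum_univ_eq_sum_range]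
          refine Finset.sum_le_sum fun ℓ _ => ?_
          by_cases hcl : c ≤ ℓ.1
          · simp only [hcl, if_true]
            have hv : (y ℓ).val ≤ 1 := by have := ZMod.val_lt (y ℓ); omega
            have : ((y ℓ).val : ℝ) ≤ 1 := by exact_mod_cast hv
            rw [div_eq_mul_inv, ← inv_pow]
            nlinarith [pow_pos (by norm_num : (0:ℝ) < 2⁻¹) (ℓ.1+1)]
          · simp only [hcl, if_false]
            have : y ℓ = 0 := h ℓ (by omega)
            simp [this]
        have h2 : ∑ n ∈ Finset.range m, (if c ≤ n then ((2:ℝ)⁻¹)^(n+1) else 0)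
            = ∑ n ∈ Finset.Ico c m, ((2:ℝ)⁻¹)^(n+1) := by
          rw [Finset.range_eq_Ico, ← Finset.sum_Ico_consecutive _ (Nat.zero_le c) hc]
          rw [Finset.sum_ite_of_false (by intro n hn; simp at hn; omega),
              Finset.sum_ite_of_true (by intro n hn; simp at hn; omega)]
          simp
        have h3 : ∑ n ∈ Finset.Ico c m, ((2:ℝ)⁻¹)^(n+1)
            = (2:ℝ)⁻¹^c - (2:ℝ)⁻¹^m := by
          have := geom_sum_Ico (x := (2:ℝ)⁻¹) (by norm_num) hc
          calc ∑ n ∈ Finset.Ico c m, ((2:ℝ)⁻¹)^(n+1)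
              = ∑ n ∈ Finset.Ico c m, ((2:ℝ)⁻¹)^n * 2⁻¹ := by
                refine Finset.sum_congr rfl fun n _ => ?_; ring
            _ = (∑ n ∈ Finset.Ico c m, ((2:ℝ)⁻¹)^n) * 2⁻¹ := by
                rw [Finset.sum_mul]
            _ = (2:ℝ)⁻¹^c - (2:ℝ)⁻¹^m := by rw [this]; ring
        linarith [h1, h2.le, h3.le, h2.ge, h3.ge]
      have hm : (0:ℝ) < (2:ℝ)⁻¹^m := by positivity
      have : (2:ℝ)^c * x ≤ 2^c * ((2:ℝ)⁻¹^c - (2:ℝ)⁻¹^m) := by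
        nlinarith [pow_pos (by norm_num : (0:ℝ) < 2) c]
      have hcc : (2:ℝ)^c * (2:ℝ)⁻¹^c = 1 := by
        rw [← mul_pow]; norm_num
      nlinarith [pow_pos (by norm_num : (0:ℝ) < 2) c]

lemma bvec_zero (m : ℕ) : bvec m 0 = 0 := by
  funext ℓ; simp [bvec]

lemma pt_zero {m s : ℕ} (C : Fin s → Matrix (Fin m) (Fin m) (ZMod 2)) (j : Fin s) :
    pt C 0 j = 0 := by
  simp [pt, bvec_zero, Matrix.mulVec_zero]

lemma Nf_eval {m : ℕ} (y : Fin m → ZMod 2) (c : ℕ) (hc : c + 1 ≤ m)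
    (hpre : ∀ ℓ : Fin m, ℓ.1 < c → y ℓ = 0) :
    Nf 0 (∑ ℓ : Fin m, ((y ℓ).val : ℝ) / 2 ^ (ℓ.1+1)) c
      = (-1) ^ (y ⟨c, hc⟩).val := by
  have hz : ∀ d : ℕ, ⌊(2:ℝ)^d * (0:ℝ)⌋ = 0 := by intro d; simp
  rcases eq_or_ne (y ⟨c, hc⟩) 0 with hyc | hyc
  · have h1 : ⌊(2:ℝ)^(c+1) * ∑ ℓ : Fin m, ((y ℓ).val : ℝ) / 2 ^ (ℓ.1+1)⌋ = 0 := by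
      rw [floor_prefix y (c+1) hc]
      intro ℓ hℓ
      rcases Nat.lt_or_ge ℓ.1 c with h | h
      · exact hpre ℓ h
      · have : ℓ = ⟨c, hc⟩ := by apply Fin.ext; simp; omega
        rw [this]; exact hyc
    rw [Nf, if_pos (by rw [hz, h1]), hyc]
    simp [ZMod.val_zero]
  · have hyc1 : y ⟨c, hc⟩ = 1 := by revert hyc; generalize y ⟨c, hc⟩ = a; revert a; decide
    have h1 : ⌊(2:ℝ)^(c+1) * ∑ ℓ : Fin m, ((y ℓ).val : ℝ) / 2 ^ (ℓ.1+1)⌋ ≠ 0 := by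
      simp only [ne_eq, floor_prefix y (c+1) hc]
      push_neg
      exact ⟨⟨c, hc⟩, by simp, hyc⟩
    have h2 : ⌊(2:ℝ)^c * ∑ ℓ : Fin m, ((y ℓ).val : ℝ) / 2 ^ (ℓ.1+1)⌋ = 0 := by
      rw [floor_prefix y c (by omega)]; exact hpre
    rw [Nf, if_neg (fun h => h1 (by rw [← h]; exact hz _)), if_pos (by rw [hz, h2])]
    rw [hyc1]; simp [ZMod.val_one]

lemma prod_neg_one {s : ℕ} (w : Finset (Fin s)) (a : Fin s → ZMod 2) :
    ∏ j ∈ w, ((-1:ℤ)) ^ (a j).val = ((-1:ℤ)) ^ ((∑ j ∈ w, a j).val) := by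
  induction w using Finset.cons_induction with
  | empty => simp
  | cons j t hj ih =>
      rw [Finset.prod_cons, Finset.sum_cons, ih]
      have key : ∀ x z : ZMod 2, ((-1:ℤ))^((x+z).val) = ((-1:ℤ))^x.val * ((-1:ℤ))^z.val := by
        decide
      rw [key]

/-- the character exponent -/
def dfun {m s : ℕ} (C : Fin s → Matrix (Fin m) (Fin m) (ZMod 2))
    (k : Fin s → ℕ) (w : Finset (Fin s)) (v : Fin m → ZMod 2) : ZMod 2 :=
  ∑ j ∈ w, dotProduct (rowAt m (C j) (k j)) v

lemma dfun_add {m s : ℕ} (C : Fin s → Matrix (Fin m) (Fin m) (ZMod 2))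
    (k : Fin s → ℕ) (w : Finset (Fin s)) (v v' : Fin m → ZMod 2) :
    dfun C k w (v + v') = dfun C k w v + dfun C k w v' := by
  unfold dfun
  rw [← Finset.sum_add_distrib]
  exact Finset.sum_congr rfl fun j _ => dotProduct_add _ _ _

/-- the per-vector summand -/
def Gfun {m s : ℕ} (C : Fin s → Matrix (Fin m) (Fin m) (ZMod 2))
    (u : Finset (Fin s)) (k : Fin s → ℕ) (w : Finset (Fin s)) (v : Fin m → ZMod 2) : ℤ :=
  (if (stack C u k).mulVec v = 0 then (1:ℤ) else 0) * ((-1:ℤ)) ^ (dfun C k w v).val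

lemma bvec_injOn (m : ℕ) : Set.InjOn (bvec m) (Finset.range (2^m)) := by
  intro i hi i' hi' h
  simp only [Finset.coe_range, Set.mem_Iio] at hi hi'
  apply Nat.eq_of_testBit_eq
  intro ℓ
  by_cases hℓ : ℓ < m
  · have h1 := congrFun h ⟨ℓ, hℓ⟩
    simp only [bvec] at h1
    cases hb : Nat.testBit i ℓ <;> cases hb' : Nat.testBit i' ℓ <;>
      rw [hb, hb'] at h1 <;> simp_all
  · rw [Nat.testBit_eq_false_of_lt (lt_of_lt_of_le hi
        (Nat.pow_le_pow_right (by norm_num) (le_of_not_gt hℓ))),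
      Nat.testBit_eq_false_of_lt (lt_of_lt_of_le hi'
        (Nat.pow_le_pow_right (by norm_num) (le_of_not_gt hℓ)))]

end Aux

theorem statement (m s : ℕ) (hm : 1 ≤ m) (hs : 1 ≤ s)
    (C : Fin s → Matrix (Fin m) (Fin m) (ZMod 2))
    (u : Finset (Fin s)) (hu : u.Nonempty)
    (k : Fin s → ℕ) (hk : ∀ j ∈ u, k j ≤ m - 1)
    (w : Finset (Fin s)) (hwu : w ⊆ u) :
    GamW C u k w = 0 ∨ GamW C u k w = 2 ^ (m - (stack C u k).rank) := by
  classical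
  have hk' : ∀ j ∈ u, k j + 1 ≤ m := fun j hj => by have := hk j hj; omega
  -- Step 1: rewrite GamW as a sum over all of F₂^m
  have step1 : GamW C u k w = ∑ v : Fin m → ZMod 2, Gfun C u k w v := by
    have hsummand : ∀ i ∈ Finset.range (2^m),
        (if (stack C u k).mulVec (bvec m i) = 0 then (1:ℤ) else 0) *
          ∏ j ∈ w, Nf (pt C 0 j) (pt C i j) (k j) = Gfun C u k w (bvec m i) := by
      intro i _
      by_cases hker : (stack C u k).mulVec (bvec m i) = 0
      · rw [Gfun, if_pos hker]
        congr 1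
        have hNf : ∀ j ∈ w, Nf (pt C 0 j) (pt C i j) (k j)
            = ((-1:ℤ)) ^ ((dotProduct (rowAt m (C j) (k j)) (bvec m i)).val) := by
          intro j hj
          have hju := hwu hj
          have hc := hk' j hju
          have hpre : ∀ ℓ : Fin m, ℓ.1 < k j → (C j).mulVec (bvec m i) ℓ = 0 := by
            intro ℓ hℓ
            have h2 := congrFun hker ⟨⟨j, hju⟩, ⟨ℓ.1, hℓ⟩⟩
            simp only [Matrix.mulVec, stack, Pi.zero_apply] at h2 ⊢
            rw [show rowAt m (C j) ℓ.1 = C j ℓ from by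
              funext t; rw [rowAt]; rw [dif_pos ℓ.2]] at h2
            exact h2
          rw [pt_zero]
          have heval := Nf_eval ((C j).mulVec (bvec m i)) (k j) hc hpre
          rw [show pt C i j
              = ∑ ℓ : Fin m, (((C j).mulVec (bvec m i) ℓ).val : ℝ) / 2 ^ (ℓ.1+1) from rfl,
            heval]
          congr 2
          rw [Matrix.mulVec]
          congr 1
          funext t
          rw [rowAt, dif_pos (show k j < m by omega)]
        rw [Finset.prod_congr rfl hNf, prod_neg_one]
        rfl
      · rw [Gfun, if_neg hker, zero_mul, zero_mul]
    rw [GamW, Finset.sum_congr rfl hsummand]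
    have himg : (Finset.range (2^m)).image (bvec m) = Finset.univ := by
      apply Finset.eq_univ_of_card
      rw [Finset.card_image_of_injOn (bvec_injOn m), Finset.card_range]
      simp
    rw [← himg, Finset.sum_image
      (fun x hx y hy hxy => bvec_injOn m (by simpa using hx) (by simpa using hy) hxy)]
  rw [step1]
  by_cases hchar : ∀ v : Fin m → ZMod 2, (stack C u k).mulVec v = 0 → dfun C k w v = 0
  · -- character trivial on the kernel: sum equals the kernel size
    right
    have hGv : ∀ v : Fin m → ZMod 2,
        Gfun C u k w v = if (stack C u k).mulVec v = 0 then (1:ℤ) else 0 := by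
      intro v
      by_cases h : (stack C u k).mulVec v = 0
      · rw [Gfun, if_pos h, hchar v h]; simp
      · rw [Gfun, if_neg h, zero_mul]
    rw [Finset.sum_congr rfl fun v _ => hGv v, Finset.sum_boole]
    -- now count the kernel
    have hcard : (Finset.univ.filter
        (fun v : Fin m → ZMod 2 => (stack C u k).mulVec v = 0)).card
        = 2 ^ (m - (stack C u k).rank) := by
      have e1 : (Finset.univ.filter
          (fun v : Fin m → ZMod 2 => (stack C u k).mulVec v = 0)).card
          = Fintype.card {v : Fin m → ZMod 2 // (stack C u k).mulVec v = 0} :=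
        (Fintype.card_subtype _).symm
      have e2 : Fintype.card {v : Fin m → ZMod 2 // (stack C u k).mulVec v = 0}
          = Fintype.card (LinearMap.ker (stack C u k).mulVecLin) := by
        apply Fintype.card_congr
        apply Equiv.subtypeEquivRight
        intro v
        rw [LinearMap.mem_ker, Matrix.mulVecLin_apply]
      have e3 : Fintype.card (LinearMap.ker (stack C u k).mulVecLin)
          = 2 ^ Module.finrank (ZMod 2) (LinearMap.ker (stack C u k).mulVecLin) := by
        have := Module.card_eq_pow_finrank (K := ZMod 2)
          (V := LinearMap.ker (stack C u k).mulVecLin)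
        simpa using this
      have e4 : Module.finrank (ZMod 2) (LinearMap.ker (stack C u k).mulVecLin)
          = m - (stack C u k).rank := by
        have hrn := LinearMap.finrank_range_add_finrank_ker (stack C u k).mulVecLin
        rw [show Module.finrank (ZMod 2) (Fin m → ZMod 2) = m by simp] at hrn
        have : (stack C u k).rank
            = Module.finrank (ZMod 2) (LinearMap.range (stack C u k).mulVecLin) := rfl
        omega
      rw [e1, e2, e3, e4]
    rw [hcard]
    push_cast
    ring
  · -- character nontrivial on the kernel: sum is zero
    left
    push_neg at hchar
    obtain ⟨v₀, hv₀, hd₀⟩ := hchar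
    have hd1 : dfun C k w v₀ = 1 := by
      revert hd₀; generalize dfun C k w v₀ = a; revert a; decide
    have hflip : ∀ v, Gfun C u k w (v + v₀) = - Gfun C u k w v := by
      intro v
      have hmv : (stack C u k).mulVec (v + v₀) = (stack C u k).mulVec v := by
        rw [Matrix.mulVec_add, hv₀, add_zero]
      have hdv : dfun C k w (v + v₀) = dfun C k w v + 1 := by
        rw [dfun_add, hd1]
      have key : ∀ a : ZMod 2, ((-1:ℤ))^((a+1).val) = -((-1:ℤ))^a.val := by decide
      rw [Gfun, Gfun, hmv, hdv, key]
      ring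
    have hsum : ∑ v : Fin m → ZMod 2, Gfun C u k w v
        = - ∑ v : Fin m → ZMod 2, Gfun C u k w v := by
      conv_lhs => rw [← Fintype.sum_equiv (Equiv.addRight v₀)
        (fun v => Gfun C u k w (v + v₀)) (Gfun C u k w) (fun v => rfl)]
      rw [Finset.sum_congr rfl fun v _ => hflip v, Finset.sum_neg_distrib]
    omega
end
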